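/- Characterization of vacuum-free equilibria at the bifurcation point: suppose the 2π-periodic kernel V satisfies that its Fourier coefficient matrix \widehat V(ℓ) ∈ ℂ^{P×P} is invertible for all |ℓ| ≥ 2, has one-dimensional kernel spanned by e₀ at |ℓ| = 1, and \widehat V(0) is invertible. Then every continuous solution u : ℝ → ℝ^P, 2π-periodic, of ∫_0^{2π} V(x−y)u(y)dy = ρ for some constant ρ ∈ ℝ^P, with mean value 1_P, is of the form u(x) = 1_P + (a cos x + b sin x) e₀ for some real a, b. -/

import Mathlib

/-!
Taking the `ℓ`-th Fourier coefficient of `∫ V(x - y) u(y) dy = ρ` turns the convolution into the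
product `2π V̂_ℓ û_ℓ`, while the constant right-hand side has no coefficient for `ℓ ≠ 0`. Hence
`û_ℓ = 0` for `|ℓ| ≥ 2`, `û_1 = c e₀` by the kernel condition, `û_0 = 1_P` by the mean condition,
and `û_{-1} = conj û_1` because `u` is real. A continuous periodic function with finitely many
nonzero Fourier coefficients is the sum of its Fourier series, so `u = 1_P + 2 Re (c e^{ix}) e₀`.
-/

open Real MeasureTheory intervalIntegral
open Complex (I exp)
open ComplexConjugate
open scoped Matrix

noncomputable def fourierCoeffTwoPi (f : ℝ → ℂ) (n : ℤ) : ℂ :=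
  (2 * π : ℂ)⁻¹ * ∫ x in (0 : ℝ)..2 * π, f x * exp (-I * n * x)

theorem integral_exp_I_mul_intCast (k : ℤ) :
    ∫ x in (0 : ℝ)..2 * π, exp (I * k * x) = if k = 0 then (2 * π : ℂ) else 0 := by
  split_ifs with hk
  · simp [hk]
  have hc : I * k ≠ 0 := by simpa [Complex.I_ne_zero] using hk
  have hperiod : exp (I * k * (2 * π : ℝ)) = 1 := by
    rw [show I * k * (2 * π : ℝ) = k * (2 * π * I) by push_cast; ring]
    exact Complex.exp_int_mul_two_pi_mul_I k
  rw [integral_exp_mul_complex hc, hperiod]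
  simp

theorem fourierCoeffTwoPi_const_mul (c : ℂ) (f : ℝ → ℂ) (n : ℤ) :
    fourierCoeffTwoPi (fun x => c * f x) n = c * fourierCoeffTwoPi f n := by
  simp only [fourierCoeffTwoPi, mul_assoc, intervalIntegral.integral_const_mul]
  ring

theorem fourierCoeffTwoPi_exp (m n : ℤ) :
    fourierCoeffTwoPi (fun x => exp (I * m * x)) n = if m = n then 1 else 0 := by
  have hexp : ∀ x : ℝ, exp (I * m * x) * exp (-I * n * x) = exp (I * (m - n : ℤ) * x) := by
    intro x
    rw [← Complex.exp_add]
    push_cast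
    ring_nf
  simp only [fourierCoeffTwoPi, hexp, integral_exp_I_mul_intCast, sub_eq_zero]
  split_ifs
  · field_simp
  · simp

theorem fourierCoeffTwoPi_const (c : ℂ) {n : ℤ} (hn : n ≠ 0) :
    fourierCoeffTwoPi (fun _ => c) n = 0 := by
  have h := fourierCoeffTwoPi_const_mul c (fun x => exp (I * (0 : ℤ) * x)) n
  rw [fourierCoeffTwoPi_exp, if_neg hn.symm, mul_zero] at h
  simpa using h

theorem fourierCoeffTwoPi_tsum {c : ℤ → ℂ} (hc : Summable fun m => ‖c m‖) (n : ℤ) :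
    fourierCoeffTwoPi (fun x => ∑' m, c m * exp (I * m * x)) n = c n := by
  let F : ℤ → C(ℝ, ℂ) := fun m =>
    ⟨fun x => c m * (exp (I * m * x) * exp (-I * n * x)), by fun_prop⟩
  have hF : Summable fun m =>
      ‖(F m).restrict (⟨Set.uIcc 0 (2 * π), isCompact_uIcc⟩ : TopologicalSpace.Compacts ℝ)‖ := by
    refine hc.of_nonneg_of_le (fun m => norm_nonneg _) fun m => ?_
    refine (ContinuousMap.norm_le _ (norm_nonneg _)).mpr fun x => ?_
    simp [F, Complex.norm_exp]
  have hterm : ∀ m,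
      (2 * π : ℂ)⁻¹ * ∫ x in (0 : ℝ)..2 * π, F m x = c m * if m = n then 1 else 0 := by
    intro m
    simp only [F, ContinuousMap.coe_mk, intervalIntegral.integral_const_mul]
    rw [← fourierCoeffTwoPi_exp]
    simp only [fourierCoeffTwoPi]
    ring
  have hpt : ∀ x : ℝ, (∑' m, c m * exp (I * m * x)) * exp (-I * n * x) = ∑' m, F m x := by
    intro x
    simp only [F, ContinuousMap.coe_mk, ← mul_assoc, tsum_mul_right]
  simp only [fourierCoeffTwoPi, hpt]
  rw [← tsum_intervalIntegral_eq_of_summable_norm hF, ← tsum_mul_left]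
  simp only [hterm, mul_ite, mul_one, mul_zero]
  exact tsum_ite_eq n c

theorem integral_mul_exp_eq_two_pi_mul_fourierCoeffTwoPi (f : ℝ → ℂ) (n : ℤ) :
    ∫ x in (0 : ℝ)..2 * π, f x * exp (-I * n * x) = 2 * π * fourierCoeffTwoPi f n := by
  have : (2 * π : ℂ) ≠ 0 := by exact_mod_cast two_pi_pos.ne'
  rw [fourierCoeffTwoPi, mul_inv_cancel_left₀ this]

theorem fourierCoeffTwoPi_comp_sub {k : ℝ → ℂ} {c : ℤ → ℂ} (hc : Summable fun m => ‖c m‖)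
    (hk : ∀ ξ, k ξ = ∑' m, c m * exp (I * m * ξ)) (y : ℝ) (n : ℤ) :
    fourierCoeffTwoPi (fun x => k (x - y)) n = c n * exp (-I * n * y) := by
  have hshift : (fun x : ℝ => k (x - y)) =
      fun x : ℝ => ∑' m : ℤ, c m * exp (-I * m * y) * exp (I * m * x) := by
    funext x
    rw [hk]
    congr 1 with m
    rw [mul_assoc (c m), ← Complex.exp_add]
    push_cast
    ring_nf
  rw [hshift, fourierCoeffTwoPi_tsum]
  simpa [Complex.norm_exp] using hc

theorem fourierCoeffTwoPi_convolution {k v : ℝ → ℂ} {c : ℤ → ℂ} (hc : Summable fun m => ‖c m‖)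
    (hk : ∀ ξ, k ξ = ∑' m, c m * exp (I * m * ξ)) (hkc : Continuous k) (hv : Continuous v)
    (n : ℤ) :
    fourierCoeffTwoPi (fun x => ∫ y in (0 : ℝ)..2 * π, k (x - y) * v y) n =
      2 * π * c n * fourierCoeffTwoPi v n := by
  have hswap :
      ∫ x in (0 : ℝ)..2 * π, (∫ y in (0 : ℝ)..2 * π, k (x - y) * v y) * exp (-I * n * x) =
        ∫ y in (0 : ℝ)..2 * π, (∫ x in (0 : ℝ)..2 * π, k (x - y) * exp (-I * n * x)) * v y := by
    simp only [← intervalIntegral.integral_mul_const]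
    rw [intervalIntegral_intervalIntegral_swap]
    · simp only [mul_right_comm]
    · have hcont : Continuous fun z : ℝ × ℝ => k (z.1 - z.2) * v z.2 * exp (-I * n * z.1) := by
        fun_prop
      exact (hcont.continuousOn.integrableOn_compact (isCompact_uIcc.prod isCompact_uIcc)).mono_set
        (Set.prod_mono Set.uIoc_subset_uIcc Set.uIoc_subset_uIcc)
  have hinner : ∀ y, ∫ x in (0 : ℝ)..2 * π, k (x - y) * exp (-I * n * x) =
      2 * π * c n * exp (-I * n * y) := by
    intro y
    rw [integral_mul_exp_eq_two_pi_mul_fourierCoeffTwoPi (fun x => k (x - y)),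
      fourierCoeffTwoPi_comp_sub hc hk]
    ring
  have hv_coeff : ∫ y in (0 : ℝ)..2 * π, 2 * π * c n * exp (-I * n * y) * v y =
      2 * π * c n * (2 * π * fourierCoeffTwoPi v n) := by
    rw [← integral_mul_exp_eq_two_pi_mul_fourierCoeffTwoPi, ← intervalIntegral.integral_const_mul]
    congr 1 with y
    ring
  have h2π : (2 * π : ℂ) ≠ 0 := by exact_mod_cast two_pi_pos.ne'
  rw [fourierCoeffTwoPi, hswap]
  simp only [hinner, hv_coeff]
  field_simp

theorem fourierCoeffTwoPi_sum {ι : Type*} (s : Finset ι) {f : ι → ℝ → ℂ}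
    (hf : ∀ i ∈ s, Continuous (f i)) (n : ℤ) :
    fourierCoeffTwoPi (fun x => ∑ i ∈ s, f i x) n = ∑ i ∈ s, fourierCoeffTwoPi (f i) n := by
  simp only [fourierCoeffTwoPi, Finset.sum_mul, ← Finset.mul_sum]
  rw [intervalIntegral.integral_finsetSum]
  exact fun i hi => ((hf i hi).mul (by fun_prop)).intervalIntegrable _ _

theorem fourierCoeffTwoPi_zero_ofReal (f : ℝ → ℝ) :
    fourierCoeffTwoPi (fun x => (f x : ℂ)) 0 =
      (1 / (2 * π) * ∫ x in (0 : ℝ)..2 * π, f x : ℝ) := by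
  simp [fourierCoeffTwoPi, intervalIntegral.integral_ofReal]

theorem fourierCoeffTwoPi_neg_ofReal (f : ℝ → ℝ) (n : ℤ) :
    fourierCoeffTwoPi (fun x => (f x : ℂ)) (-n) =
      conj (fourierCoeffTwoPi (fun x => (f x : ℂ)) n) := by
  have hconj : ∀ x : ℝ,
      (f x : ℂ) * exp (-I * (-n : ℤ) * x) = conj ((f x : ℂ) * exp (-I * n * x)) := by
    intro x
    rw [map_mul, Complex.conj_ofReal, ← Complex.exp_conj]
    simp
  rw [fourierCoeffTwoPi, fourierCoeffTwoPi, integral_congr fun x _ => hconj x,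
    integral_of_le two_pi_pos.le, integral_conj, ← integral_of_le two_pi_pos.le, map_mul, map_inv₀]
  simp [map_ofNat]

theorem eq_sum_fourierCoeffTwoPi {f : ℝ → ℂ} (hf : Continuous f)
    (hper : Function.Periodic f (2 * π)) {s : Finset ℤ}
    (hs : ∀ n ∉ s, fourierCoeffTwoPi f n = 0) (x : ℝ) :
    f x = ∑ n ∈ s, fourierCoeffTwoPi f n * exp (I * n * x) := by
  have : Fact (0 < 2 * π) := ⟨two_pi_pos⟩
  let F : C(AddCircle (2 * π), ℂ) :=
    ⟨hper.lift, (QuotientAddGroup.isQuotientMap_mk _).continuous_iff.mpr hf⟩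
  have hfourier : ∀ (n : ℤ) (y : ℝ), fourier n (y : AddCircle (2 * π)) = exp (I * n * y) := by
    intro n y
    rw [fourier_coe_apply]
    congr 1
    field_simp
    push_cast
    ring
  have hcoeff : ∀ n, fourierCoeff F n = fourierCoeffTwoPi f n := by
    intro n
    rw [fourierCoeff_eq_intervalIntegral _ _ 0, zero_add, fourierCoeffTwoPi, Complex.real_smul,
      one_div]
    push_cast
    congr 1
    refine intervalIntegral.integral_congr fun y _ => ?_
    rw [smul_eq_mul, mul_comm, hfourier]
    push_cast
    rw [show F y = f y from rfl]
    ring_nf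
  have hsum := has_pointwise_sum_fourier_series_of_summable
    (summable_of_ne_finset_zero fun n hn => (hcoeff n).trans (hs n hn)) (x : AddCircle (2 * π))
  simp only [hcoeff, hfourier, smul_eq_mul] at hsum
  exact hsum.unique (hasSum_sum_of_ne_finset_zero fun n hn => by simp [hs n hn])

theorem eq_re_fourierCoeffTwoPi_of_natAbs_le_one {f : ℝ → ℝ} (hf : Continuous f)
    (hper : Function.Periodic f (2 * π))
    (h : ∀ n : ℤ, 1 < n.natAbs → fourierCoeffTwoPi (fun x => (f x : ℂ)) n = 0) (x : ℝ) :
    f x = (fourierCoeffTwoPi (fun x => (f x : ℂ)) 0).re +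
      2 * (fourierCoeffTwoPi (fun x => (f x : ℂ)) 1 * exp (x * I)).re := by
  have hsum := eq_sum_fourierCoeffTwoPi (f := fun x => (f x : ℂ)) (s := {-1, 0, 1})
    (by fun_prop) (hper.comp ((↑) : ℝ → ℂ))
    (fun n hn => h n <| by
      simp only [Finset.mem_insert, Finset.mem_singleton, not_or] at hn
      omega) x
  rw [Finset.sum_insert (by decide), Finset.sum_insert (by decide), Finset.sum_singleton,
    fourierCoeffTwoPi_neg_ofReal] at hsum
  have hexp_neg : exp (I * (-1 : ℤ) * x) = conj (exp (x * I)) := by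
    rw [← Complex.exp_conj, map_mul, Complex.conj_ofReal, Complex.conj_I]
    push_cast
    ring_nf
  have hexp_zero : exp (I * (0 : ℤ) * x) = 1 := by simp
  have hexp_one : exp (I * (1 : ℤ) * x) = exp (x * I) := by push_cast; ring_nf
  rw [hexp_neg, hexp_zero, hexp_one, ← map_mul, mul_one, add_left_comm,
    add_comm (conj _), Complex.add_conj] at hsum
  simpa only [Complex.add_re, Complex.ofReal_re] using congrArg Complex.re hsum

theorem mulVec_fourierCoeffTwoPi_eq_zero {ι : Type*} [Fintype ι] {V : ℝ → Matrix ι ι ℝ}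
    {Vhat : ℤ → Matrix ι ι ℂ} (hVsum : ∀ p q, Summable fun ℓ => ‖Vhat ℓ p q‖)
    (hVfourier : ∀ ξ p q, (V ξ p q : ℂ) = ∑' ℓ : ℤ, Vhat ℓ p q * exp (I * ℓ * ξ))
    (hVcont : Continuous V) {u : ℝ → ι → ℝ} (hucont : Continuous u) {ρ : ι → ℝ}
    (heq : ∀ x p, ∫ y in (0 : ℝ)..2 * π, (V (x - y) *ᵥ u y) p = ρ p) {n : ℤ} (hn : n ≠ 0) :
    Vhat n *ᵥ (fun q => fourierCoeffTwoPi (fun y => (u y q : ℂ)) n) = 0 := by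
  have hVc : ∀ p q, Continuous fun ξ => (V ξ p q : ℂ) := fun p q => by fun_prop
  have huc : ∀ q, Continuous fun y => (u y q : ℂ) := fun q => by fun_prop
  funext p
  have hconv : (fun _ : ℝ => (ρ p : ℂ)) =
      fun x => ∑ q, ∫ y in (0 : ℝ)..2 * π, (V (x - y) p q : ℂ) * (u y q : ℂ) := by
    funext x
    rw [← heq x p]
    simp only [Matrix.mulVec, dotProduct]
    rw [intervalIntegral.integral_finsetSum]
    · push_cast
      simp only [← intervalIntegral.integral_ofReal]
      push_cast
      rfl
    · exact fun q _ =>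
        (by fun_prop : Continuous fun y => V (x - y) p q * u y q).intervalIntegrable _ _
  have h := congrArg (fourierCoeffTwoPi · n) hconv
  rw [fourierCoeffTwoPi_const _ hn, fourierCoeffTwoPi_sum] at h
  · simp only [fourierCoeffTwoPi_convolution (hVsum p _) (hVfourier · p _) (hVc p _) (huc _),
      mul_assoc (2 * (π : ℂ)), ← Finset.mul_sum] at h
    have h2π : (2 * π : ℂ) ≠ 0 := by exact_mod_cast two_pi_pos.ne'
    exact (mul_eq_zero.mp h.symm).resolve_left h2π
  · intro q _
    fun_prop

theorem vacuum_free_equilibria_characterization_general (P : ℕ)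
    (V : ℝ → Matrix (Fin P) (Fin P) ℝ)
    (Vhat : ℤ → Matrix (Fin P) (Fin P) ℂ)
    (hVsum : ∀ p q : Fin P, Summable fun ℓ : ℤ => ‖Vhat ℓ p q‖)
    (hVfourier : ∀ ξ : ℝ, ∀ p q : Fin P,
      (V ξ p q : ℂ) = ∑' ℓ : ℤ, Vhat ℓ p q * Complex.exp (Complex.I * ℓ * ξ))
    (hVcont : Continuous V)
    (hinv : ∀ ℓ : ℤ, ℓ ≠ 1 → ℓ ≠ -1 → IsUnit (Vhat ℓ))
    (e₀ : Fin P → ℝ)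
    (hker : ∀ ℓ : ℤ, ℓ = 1 ∨ ℓ = -1 → ∀ w : Fin P → ℂ,
      (Vhat ℓ).mulVec w = 0 ↔ ∃ c : ℂ, w = c • fun p => (e₀ p : ℂ))
    (u : ℝ → Fin P → ℝ) (hucont : Continuous u)
    (huper : ∀ x, u (x + 2 * π) = u x)
    (ρ : Fin P → ℝ)
    (heq : ∀ x, ∀ p : Fin P,
      (∫ y in (0:ℝ)..(2 * π), (V (x - y)).mulVec (u y) p) = ρ p)
    (hmean : ∀ p : Fin P, (1 / (2 * π)) * ∫ y in (0:ℝ)..(2 * π), u y p = 1) :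
    ∃ a b : ℝ, ∀ x, u x = fun p => 1 + (a * Real.cos x + b * Real.sin x) * e₀ p := by
  set û : ℤ → Fin P → ℂ := fun n q => fourierCoeffTwoPi (fun y => (u y q : ℂ)) n
  have hû : ∀ n ≠ 0, Vhat n *ᵥ û n = 0 := fun n hn =>
    mulVec_fourierCoeffTwoPi_eq_zero hVsum hVfourier hVcont hucont heq hn
  obtain ⟨c, hc⟩ := (hker 1 (Or.inl rfl) (û 1)).mp (hû 1 one_ne_zero)
  refine ⟨2 * c.re, -(2 * c.im), fun x => funext fun p => ?_⟩
  have hhigh : ∀ n : ℤ, 1 < n.natAbs → û n p = 0 := by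
    intro n hn
    have hzero : û n = 0 :=
      Matrix.mulVec_injective_iff_isUnit.mpr (hinv n (by omega) (by omega))
        (by rw [hû n (by omega), Matrix.mulVec_zero])
    rw [hzero, Pi.zero_apply]
  have hexpand := eq_re_fourierCoeffTwoPi_of_natAbs_le_one (f := fun y => u y p) (by fun_prop)
    (fun y => congrFun (huper y) p) hhigh x
  beta_reduce at hexpand
  have hû1 : fourierCoeffTwoPi (fun y => (u y p : ℂ)) 1 = c * e₀ p := congrFun hc p
  rw [hexpand, fourierCoeffTwoPi_zero_ofReal, hmean p, hû1]
  simp [Complex.mul_re]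
  ring

/-- Characterization of vacuum-free equilibria at the bifurcation point: if the Fourier
coefficient matrices `V̂ ℓ` of the `2π`-periodic matrix kernel `V` are invertible for
`ℓ = 0` and `|ℓ| ≥ 2`, and have a one-dimensional kernel spanned by `e₀` for `|ℓ| = 1`,
then every continuous `2π`-periodic solution `u` of `∫ V(x−y) u(y) dy = ρ` with mean
`1_P` has the form `u(x) = 1_P + (a cos x + b sin x) e₀`. -/
theorem vacuum_free_equilibria_characterization (P : ℕ) (hP : 0 < P)
    (V : ℝ → Matrix (Fin P) (Fin P) ℝ)
    (Vhat : ℤ → Matrix (Fin P) (Fin P) ℂ)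
    (hVsum : ∀ p q : Fin P, Summable fun ℓ : ℤ => ‖Vhat ℓ p q‖)
    (hVfourier : ∀ ξ : ℝ, ∀ p q : Fin P,
      (V ξ p q : ℂ) = ∑' ℓ : ℤ, Vhat ℓ p q * Complex.exp (Complex.I * ℓ * ξ))
    (hVcont : Continuous V)
    (hinv : ∀ ℓ : ℤ, ℓ ≠ 1 → ℓ ≠ -1 → IsUnit (Vhat ℓ))
    (e₀ : Fin P → ℝ) (he₀ : e₀ ≠ 0)
    (hker : ∀ ℓ : ℤ, ℓ = 1 ∨ ℓ = -1 → ∀ w : Fin P → ℂ,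
      (Vhat ℓ).mulVec w = 0 ↔ ∃ c : ℂ, w = c • fun p => (e₀ p : ℂ))
    (u : ℝ → Fin P → ℝ) (hucont : Continuous u)
    (huper : ∀ x, u (x + 2 * π) = u x)
    (ρ : Fin P → ℝ)
    (heq : ∀ x, ∀ p : Fin P,
      (∫ y in (0:ℝ)..(2 * π), (V (x - y)).mulVec (u y) p) = ρ p)
    (hmean : ∀ p : Fin P, (1 / (2 * π)) * ∫ y in (0:ℝ)..(2 * π), u y p = 1) :
    ∃ a b : ℝ, ∀ x, u x = fun p => 1 + (a * Real.cos x + b * Real.sin x) * e₀ p :=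
  vacuum_free_equilibria_characterization_general P V Vhat hVsum hVfourier hVcont hinv e₀ hker u
    hucont huper ρ heq hmean
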